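/- For all 0 ≤ s < v < t < T and all x, y, d ∈ ℝ, the inequality u(x,s;d,t) ≤ u(x,s;y,v) + u(y,v;d,t) holds, with equality if and only if y = γ_{x,s;d,t}(v). -/

import Mathlib

/-- The deterministic trajectory `x⁰_{x,s}`. -/
noncomputable def traj (a0 a1 T xT x s t : ℝ) : ℝ :=
  (x + a0 / a1) * Real.sinh (a1 * (T - t)) / Real.sinh (a1 * (T - s)) +
    (xT + a0 / a1) * Real.sinh (a1 * (t - s)) / Real.sinh (a1 * (T - s)) - a0 / a1

/-- The two-point cost `u(x,s;d,t)`. -/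
noncomputable def cost (a0 a1 T xT x s d t : ℝ) : ℝ :=
  a1 * Real.sinh (a1 * (T - s)) * (d - traj a0 a1 T xT x s t) ^ 2 /
    (2 * Real.sinh (a1 * (T - t)) * Real.sinh (a1 * (t - s)))

/-- The extremal path `γ_{x,s;d,t}`. -/
noncomputable def gammaPath (a0 a1 x s d t v : ℝ) : ℝ :=
  (x + a0 / a1) * Real.sinh (a1 * (t - v)) / Real.sinh (a1 * (t - s)) +
    (d + a0 / a1) * Real.sinh (a1 * (v - s)) / Real.sinh (a1 * (t - s)) - a0 / a1

lemma sinh_mul_pos {a : ℝ} (ha : a ≠ 0) {τ : ℝ} (hτ : 0 < τ) :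
    0 < a * Real.sinh (a * τ) := by
  rcases ha.lt_or_gt with h | h
  · have h1 : a * τ < 0 := mul_neg_of_neg_of_pos h hτ
    have h2 : Real.sinh (a * τ) < 0 := by
      have := Real.sinh_lt_sinh.mpr h1
      simpa using this
    exact mul_pos_of_neg_of_neg h h2
  · have h1 : 0 < a * τ := mul_pos h hτ
    have h2 : 0 < Real.sinh (a * τ) := by
      have := Real.sinh_lt_sinh.mpr h1
      simpa using this
    exact mul_pos h h2

lemma sinh_three_identity (a b c : ℝ) :
    Real.sinh (a - c) * Real.sinh b =
      Real.sinh (a - b) * Real.sinh c + Real.sinh (b - c) * Real.sinh a := by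
  rw [Real.sinh_sub, Real.sinh_sub, Real.sinh_sub]
  have h1 := Real.cosh_sq a
  ring

lemma key_lemma (a1 P Q R M N K X Y D Z : ℝ)
    (hP : 0 < a1 * P) (hQ : 0 < a1 * Q) (hR : 0 < a1 * R)
    (hM : 0 < a1 * M) (hN : 0 < a1 * N) (hK : 0 < a1 * K)
    (hid : K * Q = M * R + N * P) :
    a1 * P * (D - X * R / P - Z * K / P) ^ 2 / (2 * R * K) ≤
      a1 * P * (Y - X * Q / P - Z * M / P) ^ 2 / (2 * Q * M) +
        a1 * Q * (D - Y * R / Q - Z * N / Q) ^ 2 / (2 * R * N) ∧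
    (a1 * P * (D - X * R / P - Z * K / P) ^ 2 / (2 * R * K) =
      a1 * P * (Y - X * Q / P - Z * M / P) ^ 2 / (2 * Q * M) +
        a1 * Q * (D - Y * R / Q - Z * N / Q) ^ 2 / (2 * R * N) ↔
      Y * K = X * N + D * M) := by
  have ha1 : a1 ≠ 0 := by rintro rfl; simp at hP
  have ha2 : (0:ℝ) < a1 ^ 2 := by positivity
  have hP0 : P ≠ 0 := by rintro rfl; simp at hP
  have hQ0 : Q ≠ 0 := by rintro rfl; simp at hQ
  have hR0 : R ≠ 0 := by rintro rfl; simp at hR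
  have hM0 : M ≠ 0 := by rintro rfl; simp at hM
  have hN0 : N ≠ 0 := by rintro rfl; simp at hN
  have hK0 : K ≠ 0 := by rintro rfl; simp at hK
  have hKval : K = (M * R + N * P) / Q := (eq_div_iff hQ0).mpr hid
  have hMRNP : M * R + N * P ≠ 0 := by
    intro h
    rw [h] at hid
    exact hK0 (by
      have := mul_eq_zero.mp hid
      tauto)
  set W : ℝ := N * (Y * P - X * Q - Z * M) - M * (D * Q - Y * R - Z * N) with hWdef
  have hdelta :
      a1 * P * (Y - X * Q / P - Z * M / P) ^ 2 / (2 * Q * M) +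
        a1 * Q * (D - Y * R / Q - Z * N / Q) ^ 2 / (2 * R * N) -
        a1 * P * (D - X * R / P - Z * K / P) ^ 2 / (2 * R * K) =
      a1 / (2 * Q ^ 2 * K * M * N) * W ^ 2 := by
    rw [hWdef, hKval]
    have hMRNP' : M * R + P * N ≠ 0 := by intro h; apply hMRNP; linarith
    field_simp
    ring
  have hKMN : 0 < a1 * (K * M * N) := by
    have h1 : 0 < (a1 * K) * (a1 * M) * (a1 * N) := by positivity
    have h3 : a1 * (K * M * N) = (a1 * K) * (a1 * M) * (a1 * N) / a1 ^ 2 := by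
      field_simp
    rw [h3]; exact div_pos h1 ha2
  have hKMN0 : K * M * N ≠ 0 := by
    intro h; rw [h, mul_zero] at hKMN; exact lt_irrefl 0 hKMN
  have hC : 0 < a1 / (2 * Q ^ 2 * K * M * N) := by
    have h3 : a1 / (2 * Q ^ 2 * K * M * N) =
        a1 * (K * M * N) / (2 * Q ^ 2 * (K * M * N) ^ 2) := by
      field_simp
    rw [h3]
    apply div_pos hKMN
    positivity
  have hCW : 0 ≤ a1 / (2 * Q ^ 2 * K * M * N) * W ^ 2 :=
    mul_nonneg hC.le (sq_nonneg W)
  have hWQ : W = Q * (Y * K - (X * N + D * M)) := by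
    rw [hWdef, hKval]; field_simp; ring
  constructor
  · linarith
  · constructor
    · intro h
      have hW2 : a1 / (2 * Q ^ 2 * K * M * N) * W ^ 2 = 0 := by linarith
      have hW0 : W = 0 := by
        rcases mul_eq_zero.mp hW2 with h' | h'
        · exact absurd h' hC.ne'
        · exact pow_eq_zero_iff (n := 2) (by norm_num) |>.mp h'
      rw [hWQ] at hW0
      rcases mul_eq_zero.mp hW0 with h' | h'
      · exact absurd h' hQ0
      · linarith [sub_eq_zero.mp h']
    · intro h
      have hW0 : W = 0 := by rw [hWQ, h]; ring
      have : a1 / (2 * Q ^ 2 * K * M * N) * W ^ 2 = 0 := by rw [hW0]; ring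
      linarith

theorem stmt_7 (a0 a1 T xT : ℝ) (ha1 : a1 ≠ 0) (hT : 0 < T)
    (s v t x y d : ℝ) (hs : 0 ≤ s) (hsv : s < v) (hvt : v < t) (htT : t < T) :
    cost a0 a1 T xT x s d t ≤ cost a0 a1 T xT x s y v + cost a0 a1 T xT y v d t ∧
    (cost a0 a1 T xT x s d t = cost a0 a1 T xT x s y v + cost a0 a1 T xT y v d t ↔
      y = gammaPath a0 a1 x s d t v) := by
  have hP := sinh_mul_pos ha1 (show (0:ℝ) < T - s by linarith)
  have hQ := sinh_mul_pos ha1 (show (0:ℝ) < T - v by linarith)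
  have hR := sinh_mul_pos ha1 (show (0:ℝ) < T - t by linarith)
  have hM := sinh_mul_pos ha1 (show (0:ℝ) < v - s by linarith)
  have hN := sinh_mul_pos ha1 (show (0:ℝ) < t - v by linarith)
  have hK := sinh_mul_pos ha1 (show (0:ℝ) < t - s by linarith)
  have hK0 : Real.sinh (a1 * (t - s)) ≠ 0 := by
    intro h; rw [h, mul_zero] at hK; exact lt_irrefl 0 hK
  have hid : Real.sinh (a1 * (t - s)) * Real.sinh (a1 * (T - v)) =
      Real.sinh (a1 * (v - s)) * Real.sinh (a1 * (T - t)) +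
        Real.sinh (a1 * (t - v)) * Real.sinh (a1 * (T - s)) := by
    have h := sinh_three_identity (a1 * (T - s)) (a1 * (T - v)) (a1 * (T - t))
    rw [show a1 * (T - s) - a1 * (T - t) = a1 * (t - s) by ring,
      show a1 * (T - s) - a1 * (T - v) = a1 * (v - s) by ring,
      show a1 * (T - v) - a1 * (T - t) = a1 * (t - v) by ring] at h
    exact h
  obtain ⟨h1, h2⟩ := key_lemma a1 (Real.sinh (a1 * (T - s))) (Real.sinh (a1 * (T - v)))
    (Real.sinh (a1 * (T - t))) (Real.sinh (a1 * (v - s))) (Real.sinh (a1 * (t - v)))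
    (Real.sinh (a1 * (t - s))) (x + a0 / a1) (y + a0 / a1) (d + a0 / a1) (xT + a0 / a1)
    hP hQ hR hM hN hK hid
  have e1 : cost a0 a1 T xT x s d t =
      a1 * Real.sinh (a1 * (T - s)) *
        ((d + a0 / a1) - (x + a0 / a1) * Real.sinh (a1 * (T - t)) / Real.sinh (a1 * (T - s)) -
          (xT + a0 / a1) * Real.sinh (a1 * (t - s)) / Real.sinh (a1 * (T - s))) ^ 2 /
        (2 * Real.sinh (a1 * (T - t)) * Real.sinh (a1 * (t - s))) := by
    simp only [cost, traj]; ring_nf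
  have e2 : cost a0 a1 T xT x s y v =
      a1 * Real.sinh (a1 * (T - s)) *
        ((y + a0 / a1) - (x + a0 / a1) * Real.sinh (a1 * (T - v)) / Real.sinh (a1 * (T - s)) -
          (xT + a0 / a1) * Real.sinh (a1 * (v - s)) / Real.sinh (a1 * (T - s))) ^ 2 /
        (2 * Real.sinh (a1 * (T - v)) * Real.sinh (a1 * (v - s))) := by
    simp only [cost, traj]; ring_nf
  have e3 : cost a0 a1 T xT y v d t =
      a1 * Real.sinh (a1 * (T - v)) *
        ((d + a0 / a1) - (y + a0 / a1) * Real.sinh (a1 * (T - t)) / Real.sinh (a1 * (T - v)) -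
          (xT + a0 / a1) * Real.sinh (a1 * (t - v)) / Real.sinh (a1 * (T - v))) ^ 2 /
        (2 * Real.sinh (a1 * (T - t)) * Real.sinh (a1 * (t - v))) := by
    simp only [cost, traj]; ring_nf
  have hgamma : y = gammaPath a0 a1 x s d t v ↔
      (y + a0 / a1) * Real.sinh (a1 * (t - s)) =
        (x + a0 / a1) * Real.sinh (a1 * (t - v)) + (d + a0 / a1) * Real.sinh (a1 * (v - s)) := by
    rw [gammaPath]
    rw [show (x + a0 / a1) * Real.sinh (a1 * (t - v)) / Real.sinh (a1 * (t - s)) +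
        (d + a0 / a1) * Real.sinh (a1 * (v - s)) / Real.sinh (a1 * (t - s)) - a0 / a1 =
        ((x + a0 / a1) * Real.sinh (a1 * (t - v)) + (d + a0 / a1) * Real.sinh (a1 * (v - s))) /
          Real.sinh (a1 * (t - s)) - a0 / a1 by ring]
    rw [eq_sub_iff_add_eq, eq_div_iff hK0]
  rw [e1, e2, e3, hgamma]
  exact ⟨h1, h2⟩
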